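/- Determinant evaluation: for 0 < |q| < 1 and all n ∈ ℕ, B_n(t) A_{n+1}(t) − B_{n+1}(t) A_n(t) = C_n t^{2n+1}, where C_n = (q^{n+2})_{n+1} (−1)^n q^{(3n^2+n)/2} (q)_n/(q)_{2n+1}, and C_n ≠ 0. -/

import Mathlib

open Finset

/-- q-Pochhammer symbol `(a)_n = ∏_{j=0}^{n-1} (1 - a q^j)`. -/
noncomputable def qPoch (q a : ℝ) (n : ℕ) : ℝ := ∏ j ∈ Finset.range n, (1 - a * q ^ j)

/-- q-exponential `E_q(t) = ∏_{k=0}^∞ (1 - q^k t)⁻¹`. -/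
noncomputable def qExp (q t : ℝ) : ℝ := ∏' k : ℕ, (1 - q ^ k * t)⁻¹

/-- q-binomial coefficient. -/
noncomputable def qBinom (q : ℝ) (n k : ℕ) : ℝ :=
  qPoch q q n / (qPoch q q k * qPoch q q (n - k))

/-- Padé numerator polynomial `A_n(t)`. -/
noncomputable def padeA (q : ℝ) (n : ℕ) (t : ℝ) : ℝ :=
  ∑ k ∈ Finset.range (n + 1),
    qBinom q n k * q ^ (k * n) * qPoch q (q ^ (n + 1)) (n - k) * t ^ k

/-- Padé denominator polynomial `B_n(t)`. -/
noncomputable def padeB (q : ℝ) (n : ℕ) (t : ℝ) : ℝ :=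
  ∑ k ∈ Finset.range (n + 1),
    qBinom q n k * q ^ (k * (k - 1) / 2) * qPoch q (q ^ (n + 1)) (n - k) * (-t) ^ k

/-- Padé remainder `S_n(t)`. -/
noncomputable def padeS (q : ℝ) (n : ℕ) (t : ℝ) : ℝ :=
  (-1) ^ n * t ^ (2 * n + 1) * q ^ ((3 * n ^ 2 + n) / 2) *
    (qPoch q q n / qPoch q q (2 * n + 1)) *
    ∑' k : ℕ, qPoch q (q ^ (n + 1)) k * t ^ k / (qPoch q q k * qPoch q (q ^ (2 * n + 2)) k)

/-! Both `A_n` and `B_n` satisfy the same three-term recurrence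
`X_{n+2} = (U_n + V_n t) X_{n+1} + W_n t² X_n`, which is checked coefficientwise: the `k`-th
coefficients share the factor `[n choose k]_q (q^{n+1})_{n-k}`, and the four such factors
entering the recurrence at index `k + 2` are explicit rational multiples of one another.
Consequently the Casoratian `B_n A_{n+1} - B_{n+1} A_n` is multiplied by `-W_n t²` at each step;
starting from `(1 + q) t` at `n = 0` it equals `(-1)^n q^{(3n²+n)/2} (1 + q^{n+1}) t^{2n+1}`,
and `C_n` reduces to the same constant because `(q^{n+2})_{n+1} = (q)_{2n+2} / (q)_{n+1}`. -/

section QPochhammer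

variable {q : ℝ}

lemma qPoch_zero (q a : ℝ) : qPoch q a 0 = 1 := prod_range_zero _

lemma qPoch_one (q a : ℝ) : qPoch q a 1 = 1 - a := by simp [qPoch]

lemma qPoch_succ (q a : ℝ) (m : ℕ) : qPoch q a (m + 1) = qPoch q a m * (1 - a * q ^ m) :=
  prod_range_succ _ _

lemma qPoch_self_succ (q : ℝ) (m : ℕ) :
    qPoch q q (m + 1) = qPoch q q m * (1 - q ^ (m + 1)) := by
  rw [qPoch_succ, pow_succ']

lemma qPoch_self_mul_qPoch_pow (q : ℝ) (n m : ℕ) :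
    qPoch q q n * qPoch q (q ^ (n + 1)) m = qPoch q q (n + m) := by
  rw [qPoch, qPoch, qPoch, prod_range_add]
  congr 1
  exact prod_congr rfl fun j _ => by ring

lemma qPoch_ne_zero {a : ℝ} (hq : |q| ≤ 1) (ha : |a| < 1) (m : ℕ) : qPoch q a m ≠ 0 := by
  refine prod_ne_zero_iff.2 fun j _ => sub_ne_zero.2 fun h => ?_
  have : |a * q ^ j| < 1 := by
    rw [abs_mul, abs_pow]
    exact (mul_le_of_le_one_right (abs_nonneg a) (pow_le_one₀ (abs_nonneg q) hq)).trans_lt ha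
  rw [← h, abs_one] at this
  exact lt_irrefl _ this

lemma abs_pow_lt_one (hq : |q| < 1) {k : ℕ} (hk : k ≠ 0) : |q ^ k| < 1 := by
  rw [abs_pow]
  exact pow_lt_one₀ (abs_nonneg q) hq hk

lemma one_sub_pow_ne_zero (hq : |q| < 1) {k : ℕ} (hk : k ≠ 0) : 1 - q ^ k ≠ 0 := by
  intro h
  have := abs_pow_lt_one hq hk
  rw [← sub_eq_zero.1 h, abs_one] at this
  exact lt_irrefl _ this

lemma one_add_pow_ne_zero (hq : |q| < 1) (k : ℕ) : 1 + q ^ k ≠ 0 := by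
  rcases eq_or_ne k 0 with rfl | hk
  · norm_num
  · intro h
    have := abs_pow_lt_one hq hk
    rw [eq_neg_of_add_eq_zero_right h, abs_neg, abs_one] at this
    exact lt_irrefl _ this

lemma one_sub_ne_zero_of_abs_lt_one (hq : |q| < 1) : 1 - q ≠ 0 := by
  simpa using one_sub_pow_ne_zero hq one_ne_zero

lemma qPoch_self_add_two (q : ℝ) (m : ℕ) :
    qPoch q q (m + 2) = qPoch q q m * (1 - q ^ (m + 1)) * (1 - q ^ (m + 2)) := by
  rw [qPoch_self_succ q (m + 1), qPoch_self_succ]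

lemma qPoch_self_ne_zero (hq : |q| < 1) (m : ℕ) : qPoch q q m ≠ 0 :=
  qPoch_ne_zero hq.le hq m

end QPochhammer

/-- Equals `[n choose k]_q (q^{n+1})_{n-k}` for `k ≤ n`. -/
noncomputable def padeWeight (q : ℝ) (n k : ℕ) : ℝ :=
  if k ≤ n then qPoch q q (2 * n - k) / (qPoch q q k * qPoch q q (n - k)) else 0

section PadeWeight

variable {q : ℝ}

lemma qBinom_mul_qPoch_pow (hq : |q| < 1) {n k : ℕ} (hk : k ≤ n) :
    qBinom q n k * qPoch q (q ^ (n + 1)) (n - k) = padeWeight q n k := by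
  have h := qPoch_self_mul_qPoch_pow q n (n - k)
  rw [show n + (n - k) = 2 * n - k by omega] at h
  have := qPoch_self_ne_zero hq n
  rw [padeWeight, if_pos hk, qBinom, ← h]
  field_simp

lemma padeWeight_add (q : ℝ) (k d : ℕ) :
    padeWeight q (k + d) k = qPoch q q (k + 2 * d) / (qPoch q q k * qPoch q q d) := by
  rw [padeWeight, if_pos (by omega), show 2 * (k + d) - k = k + 2 * d by omega,
    Nat.add_sub_cancel_left]

lemma padeWeight_zero (q : ℝ) (n : ℕ) : padeWeight q n 0 = qPoch q q (2 * n) / qPoch q q n := by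
  simp [padeWeight, qPoch_zero]

lemma padeWeight_one (q : ℝ) (n : ℕ) :
    padeWeight q (n + 1) 1 = qPoch q q (2 * n + 1) / ((1 - q) * qPoch q q n) := by
  rw [padeWeight, if_pos (by omega), show 2 * (n + 1) - 1 = 2 * n + 1 by omega,
    Nat.add_sub_cancel, qPoch_one]

lemma padeWeight_add_two_zero (hq : |q| < 1) (n : ℕ) :
    padeWeight q (n + 2) 0 =
      (1 + q ^ (n + 2)) * (1 - q ^ (2 * n + 3)) * padeWeight q (n + 1) 0 := by
  rw [padeWeight_zero, padeWeight_zero, show 2 * (n + 2) = 2 * n + 2 + 2 by ring,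
    show 2 * (n + 1) = 2 * n + 2 by ring, qPoch_self_add_two, qPoch_self_succ q (n + 1)]
  have := qPoch_self_ne_zero hq (n + 1)
  have := one_sub_pow_ne_zero hq (n + 1).add_one_ne_zero
  field_simp
  ring

lemma padeWeight_add_two_one (hq : |q| < 1) (n : ℕ) :
    padeWeight q (n + 2) 1 =
      (1 + q ^ (n + 1)) * (1 - q ^ (2 * n + 3)) * padeWeight q (n + 1) 1 := by
  rw [padeWeight_one, padeWeight_one, show 2 * (n + 1) + 1 = 2 * n + 1 + 2 by ring,
    qPoch_self_add_two, qPoch_self_succ q n]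
  have := qPoch_self_ne_zero hq n
  have := one_sub_pow_ne_zero hq n.add_one_ne_zero
  have := one_sub_ne_zero_of_abs_lt_one hq
  field_simp
  ring

lemma padeWeight_add_one_zero (hq : |q| < 1) (n : ℕ) :
    padeWeight q (n + 1) 0 = (1 + q ^ (n + 1)) * (1 - q) * padeWeight q (n + 1) 1 := by
  rw [padeWeight_zero, padeWeight_one, show 2 * (n + 1) = 2 * n + 1 + 1 by ring,
    qPoch_self_succ q (2 * n + 1), qPoch_self_succ q n]
  have := qPoch_self_ne_zero hq n
  have := one_sub_pow_ne_zero hq n.add_one_ne_zero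
  have := one_sub_ne_zero_of_abs_lt_one hq
  field_simp
  ring

lemma padeWeight_add_two_add_two (hq : |q| < 1) (k d : ℕ) :
    padeWeight q (k + d + 2) (k + 2) =
      (1 - q ^ (k + 2 * d + 1)) * (1 - q ^ (k + 2 * d + 2)) /
        ((1 - q ^ (k + 1)) * (1 - q ^ (k + 2))) * padeWeight q (k + d) k := by
  rw [show k + d + 2 = k + 2 + d by ring, padeWeight_add, padeWeight_add,
    show k + 2 + 2 * d = k + 2 * d + 2 by ring, qPoch_self_add_two, qPoch_self_add_two]
  have := one_sub_pow_ne_zero hq k.add_one_ne_zero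
  have := one_sub_pow_ne_zero hq (k + 1).add_one_ne_zero
  field_simp

lemma padeWeight_add_one_add_one (hq : |q| < 1) (k d : ℕ) :
    padeWeight q (k + d + 1) (k + 1) =
      (1 - q ^ (k + 2 * d + 1)) / (1 - q ^ (k + 1)) * padeWeight q (k + d) k := by
  rw [show k + d + 1 = k + 1 + d by ring, padeWeight_add, padeWeight_add,
    show k + 1 + 2 * d = k + 2 * d + 1 by ring, qPoch_self_succ, qPoch_self_succ q k]
  have := one_sub_pow_ne_zero hq k.add_one_ne_zero
  field_simp

/-- The factor `1 - q ^ d` vanishes at `d = 0`, exactly where `k + 2` exceeds the degree `k + 1`. -/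
lemma padeWeight_add_one_add_two (hq : |q| < 1) (k d : ℕ) :
    padeWeight q (k + d + 1) (k + 2) =
      (1 - q ^ d) / ((1 - q ^ (k + 1)) * (1 - q ^ (k + 2))) * padeWeight q (k + d) k := by
  rcases d with _ | d
  · simp [padeWeight]
  · rw [show k + (d + 1) + 1 = k + 2 + d by ring, padeWeight_add, padeWeight_add,
      qPoch_self_add_two, qPoch_self_succ q d, show k + 2 + 2 * d = k + 2 * (d + 1) by ring]
    have := one_sub_pow_ne_zero hq d.add_one_ne_zero
    have := one_sub_pow_ne_zero hq k.add_one_ne_zero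
    have := one_sub_pow_ne_zero hq (k + 1).add_one_ne_zero
    field_simp

end PadeWeight

section PadeCoefficients

variable {q : ℝ}

lemma padeA_eq_sum (hq : |q| < 1) (n : ℕ) (t : ℝ) :
    padeA q n t = ∑ k ∈ range (n + 1), q ^ (k * n) * padeWeight q n k * t ^ k := by
  refine sum_congr rfl fun k hk => ?_
  rw [← qBinom_mul_qPoch_pow hq (Nat.lt_succ_iff.1 (mem_range.1 hk))]
  ring

lemma padeB_eq_sum (hq : |q| < 1) (n : ℕ) (t : ℝ) :
    padeB q n t =
      ∑ k ∈ range (n + 1), (-1) ^ k * q ^ (k * (k - 1) / 2) * padeWeight q n k * t ^ k := by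
  refine sum_congr rfl fun k hk => ?_
  rw [← qBinom_mul_qPoch_pow hq (Nat.lt_succ_iff.1 (mem_range.1 hk)), neg_pow]
  ring

end PadeCoefficients

lemma sum_mul_pow_eq_of_three_term {R : Type*} [CommRing R] {c₀ c₁ c₂ : ℕ → R} {u v w : R}
    {N : ℕ} (t : R) (h₀ : c₂ 0 = u * c₁ 0) (h₁ : c₂ 1 = u * c₁ 1 + v * c₁ 0)
    (h : ∀ k ≤ N, c₂ (k + 2) = u * c₁ (k + 2) + v * c₁ (k + 1) + w * c₀ k)
    (htop : c₁ (N + 2) = 0) :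
    ∑ m ∈ range (N + 2 + 1), c₂ m * t ^ m =
      (u + v * t) * ∑ m ∈ range (N + 1 + 1), c₁ m * t ^ m +
        w * t ^ 2 * ∑ m ∈ range (N + 1), c₀ m * t ^ m := by
  have hc₁ : ∑ m ∈ range (N + 1 + 1), c₁ m * t ^ m =
      ∑ k ∈ range (N + 1), c₁ (k + 2) * t ^ (k + 2) + c₁ 1 * t + c₁ 0 := by
    calc ∑ m ∈ range (N + 1 + 1), c₁ m * t ^ m
        _ = ∑ m ∈ range (N + 2 + 1), c₁ m * t ^ m := by simp [sum_range_succ _ (N + 2), htop]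
        _ = _ := by simp [sum_range_succ']
  have hc₁' : ∑ m ∈ range (N + 1 + 1), c₁ m * t ^ m =
      ∑ k ∈ range (N + 1), c₁ (k + 1) * t ^ (k + 1) + c₁ 0 := by
    simp [sum_range_succ' _ (N + 1)]
  have hc₂ : ∑ k ∈ range (N + 1), c₂ (k + 2) * t ^ (k + 2) =
      u * ∑ k ∈ range (N + 1), c₁ (k + 2) * t ^ (k + 2) +
        v * t * ∑ k ∈ range (N + 1), c₁ (k + 1) * t ^ (k + 1) +
          w * t ^ 2 * ∑ k ∈ range (N + 1), c₀ k * t ^ k := by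
    simp only [mul_sum, ← sum_add_distrib]
    refine sum_congr rfl fun k hk => ?_
    rw [h k (Nat.lt_succ_iff.1 (mem_range.1 hk))]
    ring
  rw [sum_range_succ', sum_range_succ', hc₂, h₀, h₁]
  linear_combination -u * hc₁ - v * t * hc₁'

/-- Coefficients of the three-term recurrence `X (n + 2) = (U + V t) X (n + 1) + W t² X n`
satisfied by both `A_n(t)` and `B_n(t)`. -/
noncomputable def padeRecU (q : ℝ) (n : ℕ) : ℝ := (1 + q ^ (n + 2)) * (1 - q ^ (2 * n + 3))

noncomputable def padeRecV (q : ℝ) (n : ℕ) : ℝ :=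
  -q ^ (n + 1) * (1 - q ^ (2 * n + 3)) / (1 + q ^ (n + 1))

noncomputable def padeRecW (q : ℝ) (n : ℕ) : ℝ :=
  q ^ (3 * n + 2) * (1 + q ^ (n + 2)) / (1 + q ^ (n + 1))

section CoefficientRecurrences

variable {q : ℝ}

lemma padeA_coeff_one_rec (hq : |q| < 1) (n : ℕ) :
    q ^ (n + 2) * padeWeight q (n + 2) 1 =
      padeRecU q n * (q ^ (n + 1) * padeWeight q (n + 1) 1) +
        padeRecV q n * padeWeight q (n + 1) 0 := by
  rw [padeWeight_add_two_one hq, padeWeight_add_one_zero hq, padeRecU, padeRecV]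
  have := one_add_pow_ne_zero hq (n + 1)
  field_simp
  ring

lemma padeB_coeff_one_rec (hq : |q| < 1) (n : ℕ) :
    -padeWeight q (n + 2) 1 =
      padeRecU q n * -padeWeight q (n + 1) 1 + padeRecV q n * padeWeight q (n + 1) 0 := by
  rw [padeWeight_add_two_one hq, padeWeight_add_one_zero hq, padeRecU, padeRecV]
  have := one_add_pow_ne_zero hq (n + 1)
  field_simp
  ring

lemma padeA_coeff_rec (hq : |q| < 1) {n k : ℕ} (hk : k ≤ n) :
    q ^ ((k + 2) * (n + 2)) * padeWeight q (n + 2) (k + 2) =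
      padeRecU q n * (q ^ ((k + 2) * (n + 1)) * padeWeight q (n + 1) (k + 2)) +
        padeRecV q n * (q ^ ((k + 1) * (n + 1)) * padeWeight q (n + 1) (k + 1)) +
          padeRecW q n * (q ^ (k * n) * padeWeight q n k) := by
  obtain ⟨d, rfl⟩ := Nat.exists_eq_add_of_le hk
  rw [padeWeight_add_two_add_two hq, padeWeight_add_one_add_two hq, padeWeight_add_one_add_one hq,
    padeRecU, padeRecV, padeRecW]
  have := one_sub_pow_ne_zero hq k.add_one_ne_zero
  have := one_sub_pow_ne_zero hq (k + 1).add_one_ne_zero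
  have := one_add_pow_ne_zero hq (k + d + 1)
  field_simp
  ring

lemma padeB_coeff_rec (hq : |q| < 1) {n k : ℕ} (hk : k ≤ n) :
    (-1) ^ (k + 2) * q ^ ((k + 2) * (k + 2 - 1) / 2) * padeWeight q (n + 2) (k + 2) =
      padeRecU q n * ((-1) ^ (k + 2) * q ^ ((k + 2) * (k + 2 - 1) / 2) *
        padeWeight q (n + 1) (k + 2)) +
      padeRecV q n * ((-1) ^ (k + 1) * q ^ ((k + 1) * (k + 1 - 1) / 2) *
        padeWeight q (n + 1) (k + 1)) +
      padeRecW q n * ((-1) ^ k * q ^ (k * (k - 1) / 2) * padeWeight q n k) := by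
  obtain ⟨d, rfl⟩ := Nat.exists_eq_add_of_le hk
  have e₂ : (k + 2) * (k + 2 - 1) / 2 = k * (k - 1) / 2 + k + (k + 1) := by
    rw [← Nat.triangle_succ, ← Nat.triangle_succ]
  rw [e₂, Nat.triangle_succ, padeWeight_add_two_add_two hq, padeWeight_add_one_add_two hq,
    padeWeight_add_one_add_one hq, padeRecU, padeRecV, padeRecW]
  have := one_sub_pow_ne_zero hq k.add_one_ne_zero
  have := one_sub_pow_ne_zero hq (k + 1).add_one_ne_zero
  have := one_add_pow_ne_zero hq (k + d + 1)
  field_simp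
  ring

end CoefficientRecurrences

section Recurrence

variable {q : ℝ}

theorem padeA_add_two (hq : |q| < 1) (n : ℕ) (t : ℝ) :
    padeA q (n + 2) t = (padeRecU q n + padeRecV q n * t) * padeA q (n + 1) t +
      padeRecW q n * t ^ 2 * padeA q n t := by
  simp only [padeA_eq_sum hq]
  refine sum_mul_pow_eq_of_three_term t ?_ ?_ (fun k hk => padeA_coeff_rec hq hk) ?_
  · simpa [padeRecU] using padeWeight_add_two_zero hq n
  · simpa using padeA_coeff_one_rec hq n
  · simp [padeWeight]

theorem padeB_add_two (hq : |q| < 1) (n : ℕ) (t : ℝ) :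
    padeB q (n + 2) t = (padeRecU q n + padeRecV q n * t) * padeB q (n + 1) t +
      padeRecW q n * t ^ 2 * padeB q n t := by
  simp only [padeB_eq_sum hq]
  refine sum_mul_pow_eq_of_three_term t ?_ ?_ (fun k hk => padeB_coeff_rec hq hk) ?_
  · simpa [padeRecU] using padeWeight_add_two_zero hq n
  · simpa using padeB_coeff_one_rec hq n
  · simp [padeWeight]

end Recurrence

lemma casoratian_add_two {R : Type*} [CommRing R] {A B : ℕ → R} {p r : R} {n : ℕ}
    (hA : A (n + 2) = p * A (n + 1) + r * A n) (hB : B (n + 2) = p * B (n + 1) + r * B n) :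
    B (n + 1) * A (n + 2) - B (n + 2) * A (n + 1) = -r * (B n * A (n + 1) - B (n + 1) * A n) := by
  rw [hA, hB]
  ring

section Determinant

variable {q : ℝ}

theorem padeB_mul_padeA_succ_sub (hq : |q| < 1) (n : ℕ) (t : ℝ) :
    padeB q n t * padeA q (n + 1) t - padeB q (n + 1) t * padeA q n t =
      (-1) ^ n * q ^ ((3 * n ^ 2 + n) / 2) * (1 + q ^ (n + 1)) * t ^ (2 * n + 1) := by
  induction n with
  | zero =>
    have hw₀ : padeWeight q 0 0 = 1 := by simp [padeWeight, qPoch_zero]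
    have hw₁ : padeWeight q 1 1 = 1 := by
      simp [padeWeight, qPoch_one, qPoch_zero, one_sub_ne_zero_of_abs_lt_one hq]
    simp [padeA_eq_sum hq, padeB_eq_sum hq, sum_range_succ, hw₀, hw₁]
    ring
  | succ n ih =>
    have hexp : (3 * (n + 1) ^ 2 + (n + 1)) / 2 = (3 * n ^ 2 + n) / 2 + (3 * n + 2) := by
      ring_nf; omega
    have := one_add_pow_ne_zero hq (n + 1)
    rw [casoratian_add_two (A := fun m => padeA q m t) (B := fun m => padeB q m t)
      (padeA_add_two hq n t) (padeB_add_two hq n t), ih, padeRecW, hexp]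
    field_simp
    ring

lemma pade_determinant_const_eq (hq : |q| < 1) (n : ℕ) :
    qPoch q (q ^ (n + 2)) (n + 1) * (-1) ^ n * q ^ ((3 * n ^ 2 + n) / 2) *
        (qPoch q q n / qPoch q q (2 * n + 1)) =
      (-1) ^ n * q ^ ((3 * n ^ 2 + n) / 2) * (1 + q ^ (n + 1)) := by
  have h := qPoch_self_mul_qPoch_pow q (n + 1) (n + 1)
  rw [show n + 1 + (n + 1) = 2 * n + 1 + 1 by ring, qPoch_self_succ q (2 * n + 1),
    qPoch_self_succ q n] at h
  have h' : qPoch q q n * qPoch q (q ^ (n + 2)) (n + 1) =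
      qPoch q q (2 * n + 1) * (1 + q ^ (n + 1)) :=
    mul_left_cancel₀ (one_sub_pow_ne_zero hq n.add_one_ne_zero) (by linear_combination h)
  have hP := mul_inv_cancel₀ (qPoch_self_ne_zero hq (2 * n + 1))
  rw [div_eq_mul_inv]
  linear_combination (-1) ^ n * q ^ ((3 * n ^ 2 + n) / 2) *
    ((qPoch q q (2 * n + 1))⁻¹ * h' + (1 + q ^ (n + 1)) * hP)

end Determinant

/-- determinant evaluation
`B_n(t) A_{n+1}(t) - B_{n+1}(t) A_n(t) = C_n t^{2n+1}` with `C_n ≠ 0`. -/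
theorem pade_determinant (q : ℝ) (hq0 : 0 < |q|) (hq1 : |q| < 1) (n : ℕ) :
    (∀ t : ℝ, padeB q n t * padeA q (n + 1) t - padeB q (n + 1) t * padeA q n t
        = (qPoch q (q ^ (n + 2)) (n + 1) * (-1) ^ n * q ^ ((3 * n ^ 2 + n) / 2) *
            (qPoch q q n / qPoch q q (2 * n + 1))) * t ^ (2 * n + 1)) ∧
      qPoch q (q ^ (n + 2)) (n + 1) * (-1) ^ n * q ^ ((3 * n ^ 2 + n) / 2) *
        (qPoch q q n / qPoch q q (2 * n + 1)) ≠ 0 := by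
  rw [pade_determinant_const_eq hq1 n]
  refine ⟨padeB_mul_padeA_succ_sub hq1 n, ?_⟩
  exact mul_ne_zero (mul_ne_zero (pow_ne_zero _ (by norm_num)) (pow_ne_zero _ (abs_pos.1 hq0)))
    (one_add_pow_ne_zero hq1 (n + 1))
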